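/- Let (X,d,p) be a pointed metric space. For a maximal self-stable (w.r.t. a scaling sequence (r_n)) family F with p̃ ∈ F, write ρ*(F) := sup{ d̃(x̃,p̃) : x̃ ∈ F } and ρ_*(F) := inf{ d̃(x̃,p̃) : x̃ ∈ F, d̃(x̃,p̃) > 0 } (∞ if there is no such x̃). Then: (a) if (r_n) is a normal scaling sequence for (X,d,p) and F is a maximal self-stable family w.r.t. (r_n) with p̃ ∈ F, then there exist a strictly increasing sequence (n_k) of natural numbers and a maximal self-stable family G w.r.t. the scaling sequence (r_{n_k})_k with p̃ ∈ G, containing some sequence c̃ with d̃(c̃,p̃) = 1, such that ρ_*(G) ≤ ρ_*(F) ≤ ρ*(F) ≤ ρ*(G); (b) conversely, if (r_n) is any scaling sequence and F is a maximal self-stable family w.r.t. (r_n) with p̃ ∈ F containing some sequence c̃ with d̃(c̃,p̃) = 1, then there exist a normal scaling sequence (μ_n) and a maximal self-stable family G w.r.t. (μ_n) with p̃ ∈ G such that ρ_*(G) ≤ ρ_*(F) ≤ ρ*(F) ≤ ρ*(G). -/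

import Mathlib

open Filter Topology Set
open scoped ENNReal

/-- A scaling sequence: strictly positive reals tending to zero. -/
def ScalingSeq (r : ℕ → ℝ) : Prop :=
  (∀ n, 0 < r n) ∧ Tendsto r atTop (𝓝 (0 : ℝ))

/-- Two sequences of points are mutually stable w.r.t. a scaling sequence. -/
def MutuallyStable {X : Type*} [MetricSpace X] (r : ℕ → ℝ) (x y : ℕ → X) : Prop :=
  ∃ L : ℝ, Tendsto (fun n => dist (x n) (y n) / r n) atTop (𝓝 L)

/-- A family of sequences is self-stable w.r.t. a scaling sequence. -/
def SelfStable {X : Type*} [MetricSpace X] (r : ℕ → ℝ) (F : Set (ℕ → X)) : Prop :=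
  ∀ x ∈ F, ∀ y ∈ F, MutuallyStable r x y

/-- A maximal self-stable family. -/
def MaxSelfStable {X : Type*} [MetricSpace X] (r : ℕ → ℝ) (F : Set (ℕ → X)) : Prop :=
  SelfStable r F ∧ ∀ G : Set (ℕ → X), SelfStable r G → F ⊆ G → G = F

/-- A sequence of reals is eventually decreasing. -/
def EvDecr (τ : ℕ → ℝ) : Prop := ∀ᶠ n in atTop, τ (n + 1) ≤ τ n

/-- A normal scaling sequence for a pointed metric space `(X, d, p)`. -/
def NormalScaling {X : Type*} [MetricSpace X] (p : X) (r : ℕ → ℝ) : Prop :=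
  ScalingSeq r ∧ EvDecr r ∧
    ∃ x : ℕ → X, Tendsto (fun n => dist (x n) p / r n) atTop (𝓝 (1 : ℝ))

/-- The set `Ẽ₀ᵈ(E)` of eventually decreasing sequences of nonzero points of `E`
tending to zero. -/
def E0d (E : Set ℝ) : Set (ℕ → ℝ) :=
  {τ | EvDecr τ ∧ (∀ n, τ n ∈ E \ {0}) ∧ Tendsto τ atTop (𝓝 (0 : ℝ))}

/-- `Ioo a b` is a connected component of the interior of `[0,∞) \ E`. -/
def IsCompExt (E : Set ℝ) (a b : ℝ) : Prop :=
  a < b ∧ Ioo a b ⊆ interior (Ici 0 \ E) ∧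
    ∀ a' b' : ℝ, a' ≤ a → b ≤ b' → Ioo a' b' ⊆ interior (Ici 0 \ E) → a' = a ∧ b' = b

/-- The set `Ĩ_E^d` of sequences of intervals. -/
def IEd (E : Set ℝ) (a b : ℕ → ℝ) : Prop :=
  (∀ n, IsCompExt E (a n) (b n)) ∧ EvDecr a ∧ Tendsto a atTop (𝓝 (0 : ℝ)) ∧
    Tendsto (fun n => (b n - a n) / b n) atTop (𝓝 (1 : ℝ))

/-- The equivalence `x ≍ y` for sequences of strictly positive numbers. -/
def Asymp (x y : ℕ → ℝ) : Prop :=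
  ∃ c₁ c₂ : ℝ, 0 < c₁ ∧ 0 < c₂ ∧ ∀ n, c₁ * x n < y n ∧ y n < c₂ * x n

/-- `E` is `τ`-strongly porous at `0`. -/
def TPorous (E : Set ℝ) (τ : ℕ → ℝ) : Prop :=
  ∃ a b : ℕ → ℝ, IEd E a b ∧ Asymp τ a

/-- `E` is completely strongly porous at `0`. -/
def CSP (E : Set ℝ) : Prop := ∀ τ ∈ E0d E, TPorous E τ

/-- The relation `⪯` (on the first components of members of `Ĩ_E^d`). -/
def Preceq (a l : ℕ → ℝ) : Prop :=
  ∃ (N₁ : ℕ) (f : ℕ → ℕ), ∀ n ≥ N₁, a n = l (f n)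

/-- `(l, m)` is a universal element of `Ĩ_E^d`. -/
def UnivElem (E : Set ℝ) (l m : ℕ → ℝ) : Prop :=
  IEd E l m ∧ ∀ a b : ℕ → ℝ, IEd E a b → Preceq a l

/-- The quantity `M(L̃) = limsup lₙ / m_{n+1}`, valued in `[0,∞]`. -/
noncomputable def MQ (l m : ℕ → ℝ) : ℝ≥0∞ :=
  Filter.limsup (fun n => ENNReal.ofReal (l n / m (n + 1))) atTop

/-- The quantity `C(τ̃)`, valued in `[0,∞]` (inf of the empty set is `∞`). -/
noncomputable def Ctau (E : Set ℝ) (τ : ℕ → ℝ) : ℝ≥0∞ :=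
  sInf {v | ∃ a b : ℕ → ℝ, IEd E a b ∧ (∀ᶠ n in atTop, τ n ≤ a n) ∧
    v = Filter.limsup (fun n => ENNReal.ofReal (a n / τ n)) atTop}

/-- The quantity `C_E`, valued in `[0,∞]`. -/
noncomputable def CE (E : Set ℝ) : ℝ≥0∞ :=
  sSup {v | ∃ τ ∈ E0d E, v = Ctau E τ}

/-- The distance set `S_p(X) = {d(x,p) : x ∈ X}`. -/
def SpSet (X : Type*) [MetricSpace X] (p : X) : Set ℝ := {t | ∃ x : X, t = dist x p}

/-- `R*_n(X,p)`: the supremum, over normal scaling sequences `r` and sequences `x` in `X`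
for which the finite limit `lim d(xₙ,p)/rₙ` exists, of this limit, in `[0,∞]`
(sup of the empty set is `0`). -/
noncomputable def RstarN (X : Type*) [MetricSpace X] (p : X) : ℝ≥0∞ :=
  sSup {v | ∃ (r : ℕ → ℝ) (x : ℕ → X) (L : ℝ), NormalScaling p r ∧
    Tendsto (fun n => dist (x n) p / r n) atTop (𝓝 L) ∧ v = ENNReal.ofReal L}

/-- `Rⁿ_*(X,p)`: the corresponding infimum over strictly positive such limits, in `[0,∞]`
(inf of the empty set is `∞`). -/
noncomputable def RlowN (X : Type*) [MetricSpace X] (p : X) : ℝ≥0∞ :=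
  sInf {v | ∃ (r : ℕ → ℝ) (x : ℕ → X) (L : ℝ), NormalScaling p r ∧
    Tendsto (fun n => dist (x n) p / r n) atTop (𝓝 L) ∧ 0 < L ∧ v = ENNReal.ofReal L}

/-- `λ(E,0,h)`: the length of the largest open subinterval of `(0,h)` containing
no point of `E`. -/
noncomputable def lamE (E : Set ℝ) (h : ℝ) : ℝ :=
  sSup {d | ∃ a b : ℝ, 0 ≤ a ∧ a ≤ b ∧ b ≤ h ∧ Ioo a b ∩ E = ∅ ∧ d = b - a}

/-- `E` is strongly porous at `0`: the right upper porosity `p⁺(E,0)` equals `1`. -/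
def StronglyPorousAtZero (E : Set ℝ) : Prop :=
  Filter.limsup (fun h => lamE E h / h) (𝓝[>] (0 : ℝ)) = 1

/-- `ρ*(F)`: the supremum of the limits `d̃(x̃,p̃)` over `x̃ ∈ F`, in `[0,∞]`. -/
noncomputable def rhoFSup {X : Type*} [MetricSpace X] (p : X) (r : ℕ → ℝ)
    (F : Set (ℕ → X)) : ℝ≥0∞ :=
  sSup {v | ∃ x ∈ F, ∃ L : ℝ,
    Tendsto (fun n => dist (x n) p / r n) atTop (𝓝 L) ∧ v = ENNReal.ofReal L}

/-- `ρ_*(F)`: the infimum of the strictly positive limits `d̃(x̃,p̃)` over `x̃ ∈ F`,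
in `[0,∞]` (`∞` if there are none). -/
noncomputable def rhoFInf {X : Type*} [MetricSpace X] (p : X) (r : ℕ → ℝ)
    (F : Set (ℕ → X)) : ℝ≥0∞ :=
  sInf {v | ∃ x ∈ F, ∃ L : ℝ,
    Tendsto (fun n => dist (x n) p / r n) atTop (𝓝 L) ∧ 0 < L ∧ v = ENNReal.ofReal L}

/-!
Only countably many members of a family matter for `ρ*` and `ρ_*`: sequences whose
normalised distances to `p` tend to the two extrema. Together with `p̃` and a sequence
`c̃` at normalised distance `1`, these form a countable family whose members all have
finite normalised distance to `p`, hence pairwise bounded normalised distances. A diagonal (Tychonoff) subsequence makes all these pairwise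
ratios converge, and Zorn extends the resulting self-stable family to a maximal one;
since the chosen members survive, `ρ_*` can only drop and `ρ*` can only grow. For (a),
`c̃` comes from normality of `(rₙ)`; for (b), one first passes to a decreasing
subsequence of `(rₙ)`.
-/

section StableFamilies

variable {X : Type*} [MetricSpace X] {p : X} {r : ℕ → ℝ}

lemma MutuallyStable.symm {x y : ℕ → X} (h : MutuallyStable r x y) : MutuallyStable r y x := by
  simpa only [MutuallyStable, dist_comm] using h

lemma mutuallyStable_self (x : ℕ → X) : MutuallyStable r x x :=
  ⟨0, by simp only [dist_self, zero_div, tendsto_const_nhds]⟩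

lemma SelfStable.exists_maxSelfStable_superset {F : Set (ℕ → X)} (hF : SelfStable r F) :
    ∃ G, MaxSelfStable r G ∧ F ⊆ G := by
  have hchains : ∀ c ⊆ {G : Set (ℕ → X) | SelfStable r G}, IsChain (· ⊆ ·) c →
      c.Nonempty → ∃ ub ∈ {G : Set (ℕ → X) | SelfStable r G}, ∀ s ∈ c, s ⊆ ub := by
    refine fun c hc hchain _ => ⟨⋃₀ c, ?_, fun s hs => subset_sUnion_of_mem hs⟩
    rintro x ⟨s, hs, hxs⟩ y ⟨t, ht, hyt⟩
    rcases hchain.total hs ht with hst | hts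
    · exact hc ht x (hst hxs) y hyt
    · exact hc hs x hxs y (hts hyt)
  obtain ⟨G, hFG, hG⟩ := zorn_subset_nonempty _ hchains F hF
  exact ⟨G, ⟨hG.prop, fun H hH hGH => (hG.eq_of_subset hH hGH).symm⟩, hFG⟩

lemma MaxSelfStable.mem_of_forall_mutuallyStable {F : Set (ℕ → X)} (hF : MaxSelfStable r F)
    {x : ℕ → X} (hx : ∀ y ∈ F, MutuallyStable r x y) : x ∈ F := by
  have hstab : SelfStable r (insert x F) := by
    rintro a (rfl | ha) b (rfl | hb)
    · exact mutuallyStable_self _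
    · exact hx b hb
    · exact (hx a ha).symm
    · exact hF.1 a ha b hb
  exact hF.2 _ hstab (subset_insert x F) ▸ mem_insert x F

lemma SelfStable.image_comp {F : Set (ℕ → X)} (hF : SelfStable r F) (φ : ℕ → ℕ)
    (hφ : StrictMono φ) :
    SelfStable (fun k => r (φ k)) ((fun x k => x (φ k)) '' F) := by
  rintro _ ⟨x, hx, rfl⟩ _ ⟨y, hy, rfl⟩
  obtain ⟨L, hL⟩ := hF x hx y hy
  exact ⟨L, hL.comp hφ.tendsto_atTop⟩

lemma dist_div_le_add_dist_div (x y p : X) {t : ℝ} (ht : 0 ≤ t) :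
    dist x y / t ≤ dist x p / t + dist y p / t := by
  rw [← add_div]
  exact div_le_div_of_nonneg_right (dist_triangle_right x y p) ht

lemma sub_dist_div_le_dist_div (x y p : X) {t : ℝ} (ht : 0 ≤ t) :
    dist x p / t - dist y p / t ≤ dist x y / t := by
  rw [← sub_div]
  exact div_le_div_of_nonneg_right (by linarith [dist_triangle x y p]) ht

lemma tendsto_dist_div_of_tendsto_zero (hr : ∀ n, 0 < r n) {x y : ℕ → X} {a : ℝ}
    (hx : Tendsto (fun n => dist (x n) p / r n) atTop (𝓝 a))
    (hy : Tendsto (fun n => dist (y n) p / r n) atTop (𝓝 0)) :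
    Tendsto (fun n => dist (x n) (y n) / r n) atTop (𝓝 a) :=
  tendsto_of_tendsto_of_tendsto_of_le_of_le (by simpa using hx.sub hy)
    (by simpa using hx.add hy) (fun n => sub_dist_div_le_dist_div _ _ _ (hr n).le)
    (fun n => dist_div_le_add_dist_div _ _ _ (hr n).le)

/-- Otherwise every member is at normalised distance `0` from `p`, so `x` is at normalised
distance `1` from each of them and maximality puts `x` into the family. -/
lemma MaxSelfStable.exists_mem_tendsto_pos (hr : ∀ n, 0 < r n) {x : ℕ → X}
    (hx : Tendsto (fun n => dist (x n) p / r n) atTop (𝓝 1)) {F : Set (ℕ → X)}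
    (hF : MaxSelfStable r F) (hpF : (fun _ => p) ∈ F) :
    ∃ y ∈ F, ∃ L : ℝ, Tendsto (fun n => dist (y n) p / r n) atTop (𝓝 L) ∧ 0 < L := by
  by_contra! hnone
  have hzero : ∀ y ∈ F, Tendsto (fun n => dist (y n) p / r n) atTop (𝓝 0) := by
    intro y hy
    obtain ⟨L, hL⟩ := hF.1 y hy _ hpF
    have hL0 : 0 ≤ L := ge_of_tendsto' hL fun n => div_nonneg dist_nonneg (hr n).le
    obtain rfl : L = 0 := le_antisymm (hnone y hy L hL) hL0
    exact hL
  have hxF : x ∈ F := hF.mem_of_forall_mutuallyStable fun y hy =>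
    ⟨1, tendsto_dist_div_of_tendsto_zero hr hx (hzero y hy)⟩
  exact one_pos.not_ge (hnone x hxF 1 hx)

lemma exists_strictMono_selfStable_image {S : Set (ℕ → X)} (hS : S.Countable)
    (hr : ∀ n, 0 < r n)
    (hlim : ∀ x ∈ S, ∃ L : ℝ, Tendsto (fun n => dist (x n) p / r n) atTop (𝓝 L)) :
    ∃ φ : ℕ → ℕ, StrictMono φ ∧
      SelfStable (fun k => r (φ k)) ((fun x k => x (φ k)) '' S) := by
  have : Countable S := hS.to_subtype
  have hbdd : ∀ q : S × S, ∃ B, ∀ n, dist (q.1.1 n) (q.2.1 n) / r n ∈ Icc (0 : ℝ) B := by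
    rintro ⟨⟨x, hx⟩, ⟨y, hy⟩⟩
    obtain ⟨Lx, hLx⟩ := hlim x hx
    obtain ⟨Ly, hLy⟩ := hlim y hy
    obtain ⟨B, hB⟩ := (hLx.add hLy).bddAbove_range
    exact ⟨B, fun n => ⟨div_nonneg dist_nonneg (hr n).le,
      (dist_div_le_add_dist_div _ _ p (hr n).le).trans (hB ⟨n, rfl⟩)⟩⟩
  choose B hB using hbdd
  have hcompact : IsCompact (univ.pi fun q => Icc (0 : ℝ) (B q)) :=
    isCompact_univ_pi fun _ => isCompact_Icc
  obtain ⟨L, -, φ, hφ, hL⟩ := hcompact.tendsto_subseq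
    (x := fun n q => dist (q.1.1 n) (q.2.1 n) / r n) fun n q _ => hB q n
  refine ⟨φ, hφ, ?_⟩
  rintro _ ⟨x, hx, rfl⟩ _ ⟨y, hy, rfl⟩
  exact ⟨L (⟨x, hx⟩, ⟨y, hy⟩), tendsto_pi_nhds.mp hL (⟨x, hx⟩, ⟨y, hy⟩)⟩

lemma exists_strictMono_antitone_comp (hr : ScalingSeq r) :
    ∃ ψ : ℕ → ℕ, StrictMono ψ ∧ Antitone (fun k => r (ψ k)) := by
  have hnext : ∀ n, ∃ m, n < m ∧ r m ≤ r n := fun n => by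
    obtain ⟨m, hm, hnm⟩ :=
      ((hr.2.eventually_lt_const (hr.1 n)).and (eventually_gt_atTop n)).exists
    exact ⟨m, hnm, hm.le⟩
  choose f hf_gt hf_le using hnext
  exact ⟨fun k => f^[k] 0, strictMono_nat_of_lt_succ fun k => by
      simpa only [Function.iterate_succ_apply'] using hf_gt _,
    antitone_nat_of_succ_le fun k => by
      simpa only [Function.iterate_succ_apply'] using hf_le _⟩

end StableFamilies

section Radii

variable {X : Type*} [MetricSpace X] {p : X} {r : ℕ → ℝ}

lemma rhoFInf_le_rhoFSup {F : Set (ℕ → X)} {x : ℕ → X} (hx : x ∈ F) {L : ℝ}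
    (hL : Tendsto (fun n => dist (x n) p / r n) atTop (𝓝 L)) (hL0 : 0 < L) :
    rhoFInf p r F ≤ rhoFSup p r F :=
  calc rhoFInf p r F ≤ ENNReal.ofReal L := sInf_le ⟨x, hx, L, hL, hL0, rfl⟩
    _ ≤ rhoFSup p r F := le_sSup ⟨x, hx, L, hL, rfl⟩

lemma rhoFSup_le_of_comp_mem {F G : Set (ℕ → X)} {φ : ℕ → ℕ} (hφ : StrictMono φ)
    (hFG : ∀ x ∈ F, (fun k => x (φ k)) ∈ G) :
    rhoFSup p r F ≤ rhoFSup p (fun k => r (φ k)) G :=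
  sSup_le_sSup fun _ ⟨x, hx, L, hL, hv⟩ => ⟨_, hFG x hx, L, hL.comp hφ.tendsto_atTop, hv⟩

lemma rhoFInf_le_of_comp_mem {F G : Set (ℕ → X)} {φ : ℕ → ℕ} (hφ : StrictMono φ)
    (hFG : ∀ x ∈ F, (fun k => x (φ k)) ∈ G) :
    rhoFInf p (fun k => r (φ k)) G ≤ rhoFInf p r F :=
  sInf_le_sInf fun _ ⟨x, hx, L, hL, hL0, hv⟩ =>
    ⟨_, hFG x hx, L, hL.comp hφ.tendsto_atTop, hL0, hv⟩

lemma exists_countable_rhoFSup_le (p : X) (r : ℕ → ℝ) (F : Set (ℕ → X)) :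
    ∃ s ⊆ F, s.Countable ∧ rhoFSup p r F ≤ rhoFSup p r s := by
  rcases Set.eq_empty_or_nonempty {v | ∃ x ∈ F, ∃ L : ℝ,
      Tendsto (fun n => dist (x n) p / r n) atTop (𝓝 L) ∧ v = ENNReal.ofReal L} with h | h
  · exact ⟨∅, empty_subset F, countable_empty, by simp only [rhoFSup, h, sSup_empty, bot_le]⟩
  obtain ⟨u, -, hu, hmem⟩ := exists_seq_tendsto_sSup h (OrderTop.bddAbove _)
  choose x hxF L hL hv using hmem
  refine ⟨range x, range_subset_iff.mpr hxF, countable_range x,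
    le_of_tendsto' hu fun j => le_sSup ⟨x j, mem_range_self j, L j, hL j, hv j⟩⟩

lemma exists_countable_rhoFInf_le (p : X) (r : ℕ → ℝ) (F : Set (ℕ → X)) :
    ∃ s ⊆ F, s.Countable ∧ rhoFInf p r s ≤ rhoFInf p r F := by
  rcases Set.eq_empty_or_nonempty {v | ∃ x ∈ F, ∃ L : ℝ,
      Tendsto (fun n => dist (x n) p / r n) atTop (𝓝 L) ∧ 0 < L ∧ v = ENNReal.ofReal L} with
    h | h
  · exact ⟨∅, empty_subset F, countable_empty, by simp only [rhoFInf, h, sInf_empty, le_top]⟩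
  obtain ⟨u, -, hu, hmem⟩ := exists_seq_tendsto_sInf h (OrderBot.bddBelow _)
  choose x hxF L hL hL0 hv using hmem
  refine ⟨range x, range_subset_iff.mpr hxF, countable_range x,
    ge_of_tendsto' hu fun j => sInf_le ⟨x j, mem_range_self j, L j, hL j, hL0 j, hv j⟩⟩

theorem SelfStable.exists_subseq_maxSelfStable (hr : ∀ n, 0 < r n) {F : Set (ℕ → X)}
    (hF : SelfStable r F) (hpF : (fun _ => p) ∈ F) {c : ℕ → X}
    (hc : Tendsto (fun n => dist (c n) p / r n) atTop (𝓝 1)) :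
    ∃ φ : ℕ → ℕ, StrictMono φ ∧ ∃ G : Set (ℕ → X),
      MaxSelfStable (fun k => r (φ k)) G ∧ (fun _ => p) ∈ G ∧
      (∃ c ∈ G, Tendsto (fun k => dist (c k) p / r (φ k)) atTop (𝓝 1)) ∧
      rhoFInf p (fun k => r (φ k)) G ≤ rhoFInf p r F ∧
      rhoFSup p r F ≤ rhoFSup p (fun k => r (φ k)) G := by
  obtain ⟨s₁, hs₁F, hs₁, hsup⟩ := exists_countable_rhoFSup_le p r F
  obtain ⟨s₂, hs₂F, hs₂, hinf⟩ := exists_countable_rhoFInf_le p r F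
  set S := insert c (insert (fun _ => p) (s₁ ∪ s₂))
  have hlim : ∀ x ∈ S, ∃ L : ℝ, Tendsto (fun n => dist (x n) p / r n) atTop (𝓝 L) := by
    rintro x (rfl | rfl | hx₁ | hx₂)
    · exact ⟨1, hc⟩
    · exact hF _ hpF _ hpF
    · exact hF x (hs₁F hx₁) _ hpF
    · exact hF x (hs₂F hx₂) _ hpF
  obtain ⟨φ, hφ, hS⟩ := exists_strictMono_selfStable_image
    (((hs₁.union hs₂).insert _).insert c) hr hlim
  obtain ⟨G, hG, hSG⟩ := hS.exists_maxSelfStable_superset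
  have hmem : ∀ x ∈ S, (fun k => x (φ k)) ∈ G := fun x hx => hSG ⟨x, hx, rfl⟩
  refine ⟨φ, hφ, G, hG, hmem _ (mem_insert_of_mem c (mem_insert _ _)),
    ⟨_, hmem c (mem_insert c _), hc.comp hφ.tendsto_atTop⟩, ?_, ?_⟩
  · exact (rhoFInf_le_of_comp_mem hφ fun x hx => hmem x (by simp [S, hx])).trans hinf
  · exact hsup.trans (rhoFSup_le_of_comp_mem hφ fun x hx => hmem x (by simp [S, hx]))

end Radii

/-- (a) from a maximal self-stable family over a normal scaling sequence
one can pass to a subsequence and a maximal self-stable family containing an element at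
distance `1` from `p̃`, preserving the chain of inequalities; (b) conversely, from a
maximal self-stable family containing an element at distance `1` one can pass to a
normal scaling sequence. -/
theorem stmt_17 {X : Type*} [MetricSpace X] (p : X) :
    (∀ (r : ℕ → ℝ) (F : Set (ℕ → X)), NormalScaling p r → MaxSelfStable r F →
      (fun _ => p) ∈ F →
      ∃ φ : ℕ → ℕ, StrictMono φ ∧ ∃ G : Set (ℕ → X),
        MaxSelfStable (fun k => r (φ k)) G ∧ (fun _ => p) ∈ G ∧
        (∃ c ∈ G, Tendsto (fun k => dist (c k) p / r (φ k)) atTop (𝓝 (1 : ℝ))) ∧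
        rhoFInf p (fun k => r (φ k)) G ≤ rhoFInf p r F ∧
        rhoFInf p r F ≤ rhoFSup p r F ∧
        rhoFSup p r F ≤ rhoFSup p (fun k => r (φ k)) G) ∧
    (∀ (r : ℕ → ℝ) (F : Set (ℕ → X)), ScalingSeq r → MaxSelfStable r F →
      (fun _ => p) ∈ F →
      (∃ c ∈ F, Tendsto (fun n => dist (c n) p / r n) atTop (𝓝 (1 : ℝ))) →
      ∃ (μ : ℕ → ℝ) (G : Set (ℕ → X)), NormalScaling p μ ∧ MaxSelfStable μ G ∧
        (fun _ => p) ∈ G ∧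
        rhoFInf p μ G ≤ rhoFInf p r F ∧
        rhoFInf p r F ≤ rhoFSup p r F ∧
        rhoFSup p r F ≤ rhoFSup p μ G) := by
  constructor
  · rintro r F ⟨hr, -, x, hx⟩ hF hpF
    obtain ⟨y, hyF, L, hL, hL0⟩ := hF.exists_mem_tendsto_pos hr.1 hx hpF
    obtain ⟨φ, hφ, G, hG, hpG, hcG, hinf, hsup⟩ :=
      hF.1.exists_subseq_maxSelfStable hr.1 hpF hx
    exact ⟨φ, hφ, G, hG, hpG, hcG, hinf, rhoFInf_le_rhoFSup hyF hL hL0, hsup⟩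
  · rintro r F hr hF hpF ⟨c, hcF, hc⟩
    obtain ⟨ψ, hψ, hanti⟩ := exists_strictMono_antitone_comp hr
    have hcomp : ∀ x ∈ F, (fun k => x (ψ k)) ∈ (fun x k => x (ψ k)) '' F :=
      fun x hx => ⟨x, hx, rfl⟩
    obtain ⟨φ, hφ, G, hG, hpG, ⟨c', -, hc'⟩, hinf, hsup⟩ :=
      (hF.1.image_comp ψ hψ).exists_subseq_maxSelfStable (fun k => hr.1 _) (hcomp _ hpF)
        (hc.comp hψ.tendsto_atTop)
    have hμ : NormalScaling p fun k => r (ψ (φ k)) :=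
      ⟨⟨fun k => hr.1 _, hr.2.comp (hψ.comp hφ).tendsto_atTop⟩,
        Eventually.of_forall fun k => hanti (hφ.monotone k.le_succ), c', hc'⟩
    exact ⟨_, G, hμ, hG, hpG, hinf.trans (rhoFInf_le_of_comp_mem hψ hcomp),
      rhoFInf_le_rhoFSup hcF hc one_pos, (rhoFSup_le_of_comp_mem hψ hcomp).trans hsup⟩
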